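/- Let D be a chord diagram and let i, i+1, j, j+1 be four distinct points occurring in this cyclic order such that α = {i, j} and β = {i+1, j+1} are chords of D (a weak RII pair, the Gauss-diagram form of the weak second Reidemeister move). Then α and β cross, every chord e of D other than α and β crosses α if and only if e crosses β, and X(D) = X(D') + 2k + 1, where D' is obtained from D by deleting α and β and k is the number of chords other than β crossing α. If moreover D is evenly interlaced, then k is odd and hence X(D) ≡ X(D') + 3 (mod 4). (This is the paper's claim that one weak RII move changes ⊗ by 4m − 1 for some positive integer m.) -/

import Mathlib

/-- A chord diagram on `2 * n` points: a fixed-point-free involution of `ZMod (2 * n)`.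
Its two-element orbits are called chords; the points lie on a circle in their
natural cyclic order. -/
structure ChordDiagram (n : ℕ) where
  inv : ZMod (2 * n) → ZMod (2 * n)
  involutive : Function.Involutive inv
  fixedPointFree : ∀ x, inv x ≠ x

/-- A chord: an unordered pair of points of the circle `ZMod m`. -/
abbrev Chord (m : ℕ) := Sym2 (ZMod m)

/-- `x` lies in the open cyclic arc running counterclockwise from `a` to `b`. -/
def InArc {m : ℕ} (a b x : ZMod m) : Prop :=
  0 < (x - a).val ∧ (x - a).val < (b - a).val

/-- Two chords cross: exactly one endpoint of the second lies in the open cyclic arc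
bounded by the first. -/
def Chord.Crosses {m : ℕ} (e f : Chord m) : Prop :=
  ∃ a b c d : ZMod m, e = s(a, b) ∧ f = s(c, d) ∧ Xor' (InArc a b c) (InArc a b d)

/-- The set of chords of a chord diagram. -/
def ChordDiagram.chords {n : ℕ} (D : ChordDiagram n) : Set (Chord (2 * n)) :=
  {e | ∃ x, e = s(x, D.inv x)}

/-- `P` is an (unordered) pair of crossing chords of `D`. -/
def ChordDiagram.IsCrossingPair {n : ℕ} (D : ChordDiagram n)
    (P : Finset (Chord (2 * n))) : Prop :=
  P.card = 2 ∧ (∀ e ∈ P, e ∈ D.chords) ∧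
    ∀ e ∈ P, ∀ f ∈ P, e ≠ f → Chord.Crosses e f

/-- `P` is an (unordered) triple of pairwise crossing chords of `D`. -/
def ChordDiagram.IsTripleChord {n : ℕ} (D : ChordDiagram n)
    (P : Finset (Chord (2 * n))) : Prop :=
  P.card = 3 ∧ (∀ e ∈ P, e ∈ D.chords) ∧
    ∀ e ∈ P, ∀ f ∈ P, e ≠ f → Chord.Crosses e f

/-- `P` is an H-triple of `D`: a triple `{a, b, c}` of chords of `D` such that `c`
crosses both `a` and `b` while `a` and `b` do not cross. -/
def ChordDiagram.IsHTriple {n : ℕ} (D : ChordDiagram n)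
    (P : Finset (Chord (2 * n))) : Prop :=
  P.card = 3 ∧ (∀ e ∈ P, e ∈ D.chords) ∧
    ∃ c ∈ P, (∀ e ∈ P, e ≠ c → Chord.Crosses c e) ∧
      ∀ a ∈ P, ∀ b ∈ P, a ≠ c → b ≠ c → a ≠ b → ¬ Chord.Crosses a b

/-- `X D`: the number of unordered pairs of chords of `D` that cross. -/
noncomputable def ChordDiagram.X {n : ℕ} (D : ChordDiagram n) : ℕ :=
  Set.ncard {P | D.IsCrossingPair P}

/-- `T D`: the number of unordered triples of chords of `D` that pairwise cross. -/
noncomputable def ChordDiagram.T {n : ℕ} (D : ChordDiagram n) : ℕ :=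
  Set.ncard {P | D.IsTripleChord P}

/-- `H D`: the number of H-triples of `D`. -/
noncomputable def ChordDiagram.H {n : ℕ} (D : ChordDiagram n) : ℕ :=
  Set.ncard {P | D.IsHTriple P}

/-- `D'` is obtained from `D` by deleting the set `S` of chords: deletion removes the
chords of `S` together with their endpoints and reindexes the remaining points
preserving their cyclic order; in particular it induces a bijection between the
remaining chords of `D` and the chords of `D'` preserving all crossing relations. -/
def ChordDiagram.DeletionOf {n n' : ℕ} (D : ChordDiagram n) (S : Set (Chord (2 * n)))
    (D' : ChordDiagram n') : Prop :=
  ∃ φ : {e : Chord (2 * n) // e ∈ D.chords ∧ e ∉ S} ≃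
      {e : Chord (2 * n') // e ∈ D'.chords},
    ∀ e f, Chord.Crosses e.1 f.1 ↔ Chord.Crosses (φ e).1 (φ f).1

/-- Four points occurring in this (strict counterclockwise) cyclic order;
in particular they are pairwise distinct. -/
def CyclicOrd4 {m : ℕ} (a b c d : ZMod m) : Prop :=
  0 < (b - a).val ∧ (b - a).val < (c - a).val ∧ (c - a).val < (d - a).val

/-- Six points occurring in this (strict counterclockwise) cyclic order;
in particular they are pairwise distinct. -/
def CyclicOrd6 {m : ℕ} (a b c d e f : ZMod m) : Prop :=
  0 < (b - a).val ∧ (b - a).val < (c - a).val ∧ (c - a).val < (d - a).val ∧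
    (d - a).val < (e - a).val ∧ (e - a).val < (f - a).val

/-- `D` is evenly interlaced: every chord of `D` crosses an even number of chords
of `D` (true for the Gauss diagram of every knot projection). -/
def ChordDiagram.EvenlyInterlaced {n : ℕ} (D : ChordDiagram n) : Prop :=
  ∀ e ∈ D.chords, Even (Set.ncard {f | f ∈ D.chords ∧ Chord.Crosses e f})

/-- Exactly two of the three propositions hold. -/
def ExactlyTwo (A B C : Prop) : Prop :=
  (A ∧ B ∧ ¬ C) ∨ (A ∧ ¬ B ∧ C) ∨ (¬ A ∧ B ∧ C)

/-- A strong RIII move: the three pairwise crossing chords `{p, q+1}`, `{q, r+1}`,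
`{r, p+1}` (where `p, p+1, q, q+1, r, r+1` occur in this cyclic order) are replaced by
the three chords `{p+1, q}`, `{q+1, r}`, `{r+1, p}`, all other chords being unchanged. -/
def ChordDiagram.StrongRIII {n : ℕ} (D D' : ChordDiagram n) : Prop :=
  ∃ p q r : ZMod (2 * n), CyclicOrd6 p (p + 1) q (q + 1) r (r + 1) ∧
    s(p, q + 1) ∈ D.chords ∧ s(q, r + 1) ∈ D.chords ∧ s(r, p + 1) ∈ D.chords ∧
    D'.chords = (D.chords \ {s(p, q + 1), s(q, r + 1), s(r, p + 1)}) ∪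
      {s(p + 1, q), s(q + 1, r), s(r + 1, p)}

/-! The arcs `(i, j)` and `(i + 1, j + 1)` contain the same points apart from `i + 1` and `j`,
so a chord disjoint from `α = {i, j}` and `β = {i + 1, j + 1}` crosses `α` iff it crosses `β`;
hence `α` and `β` both cross exactly `k + 1` chords. The crossing pairs of `D` are those of `D'`
together with the pairs meeting `{α, β}`, and by inclusion–exclusion there are
`(k + 1) + (k + 1) - 1` of the latter. If `D` is evenly interlaced, `k + 1` is even. -/

namespace ZMod

variable {m : ℕ} [NeZero m]

theorem val_sub_eq_ite (a b x : ZMod m) :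
    (x - b).val = if (b - a).val ≤ (x - a).val then (x - a).val - (b - a).val
      else m + (x - a).val - (b - a).val := by
  have hx : x - b = (x - a) - (b - a) := by ring
  split_ifs with h
  · rw [hx, ZMod.val_sub h]
  · push Not at h
    have : NeZero ((b - a) - (x - a)) := ⟨fun h0 => by rw [sub_eq_zero.mp h0] at h; omega⟩
    rw [show x - b = -((b - a) - (x - a)) by ring, ZMod.val_neg_of_ne_zero, ZMod.val_sub h.le]
    have := ZMod.val_lt (b - a)
    omega

theorem val_sub_ne_val_sub {x y : ZMod m} (a : ZMod m) (h : x ≠ y) : (x - a).val ≠ (y - a).val :=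
  (ZMod.val_injective m).ne (sub_left_injective.ne h)

omit [NeZero m] in
theorem val_sub_pos {x a : ZMod m} (h : x ≠ a) : 0 < (x - a).val :=
  ZMod.val_pos.mpr (sub_ne_zero.mpr h)

end ZMod

section CyclicOrder

variable {m : ℕ} [NeZero m] {a b c d x : ZMod m}

open ZMod

theorem inArc_swap (hab : a ≠ b) (hxa : x ≠ a) (hxb : x ≠ b) : InArc b a x ↔ ¬ InArc a b x := by
  have := val_sub_ne_val_sub a hxb
  have := val_sub_pos hxa
  have := val_sub_pos hab.symm
  have := ZMod.val_lt (x - a)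
  have := ZMod.val_lt (b - a)
  unfold InArc
  rw [val_sub_eq_ite a b x, val_sub_eq_ite a b a, sub_self, ZMod.val_zero]
  split_ifs <;> omega

theorem inArc_add_one_iff (hx : x ≠ a + 1) (hxb : x ≠ b) :
    InArc (a + 1) (b + 1) x ↔ InArc a b x := by
  rcases Nat.lt_or_ge 1 m with hm | hm
  · have : Fact (1 < m) := ⟨hm⟩
    have := val_sub_ne_val_sub a hx
    have := val_sub_ne_val_sub a hxb
    have := ZMod.val_lt (x - a)
    have := ZMod.val_lt (b - a)
    unfold InArc
    rw [add_sub_add_right_eq_sub, val_sub_eq_ite a (a + 1) x, add_sub_cancel_left,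
      ZMod.val_one] at *
    split_ifs <;> omega
  · have : m = 1 := by have := NeZero.ne m; omega
    subst this
    exact absurd (Subsingleton.elim x b) hxb

theorem Chord.crosses_mk_iff (hab : a ≠ b) (hca : c ≠ a) (hcb : c ≠ b) (hda : d ≠ a)
    (hdb : d ≠ b) : Chord.Crosses s(a, b) s(c, d) ↔ Xor (InArc a b c) (InArc a b d) := by
  refine ⟨?_, fun h => ⟨a, b, c, d, rfl, rfl, h⟩⟩
  rintro ⟨a', b', c', d', he, hf, (hx : Xor _ _)⟩
  rcases Sym2.eq_iff.mp he with ⟨rfl, rfl⟩ | ⟨rfl, rfl⟩ <;>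
    rcases Sym2.eq_iff.mp hf with ⟨rfl, rfl⟩ | ⟨rfl, rfl⟩
  · exact hx
  · exact hx.symm
  · rwa [inArc_swap hab hca hcb, inArc_swap hab hda hdb, xor_not_not] at hx
  · rwa [inArc_swap hab hca hcb, inArc_swap hab hda hdb, xor_not_not, xor_comm] at hx

theorem Chord.crosses_mk_comm (hab : a ≠ b) (hcd : c ≠ d) (hca : c ≠ a) (hcb : c ≠ b)
    (hda : d ≠ a) (hdb : d ≠ b) :
    Chord.Crosses s(a, b) s(c, d) ↔ Chord.Crosses s(c, d) s(a, b) := by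
  rw [Chord.crosses_mk_iff hab hca hcb hda hdb,
    Chord.crosses_mk_iff hcd hca.symm hda.symm hcb.symm hdb.symm]
  have := val_sub_ne_val_sub a hcb
  have := val_sub_ne_val_sub a hdb
  have := val_sub_ne_val_sub a hcd
  have := val_sub_pos hca
  have := val_sub_pos hda
  have := val_sub_pos hab.symm
  have := ZMod.val_lt (b - a)
  have := ZMod.val_lt (c - a)
  have := ZMod.val_lt (d - a)
  unfold Xor InArc
  rw [val_sub_eq_ite a c a, val_sub_eq_ite a c b, val_sub_eq_ite a c d, sub_self, ZMod.val_zero]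
  split_ifs <;> omega

omit [NeZero m] in
theorem Chord.not_crosses_self (e : Chord m) : ¬ Chord.Crosses e e := by
  rintro ⟨a, b, c, d, he, hf, hx⟩
  have ha : ¬ InArc a b a := by simp [InArc]
  have hb : ¬ InArc a b b := by simp [InArc]
  rcases Sym2.eq_iff.mp (he.symm.trans hf) with ⟨rfl, rfl⟩ | ⟨rfl, rfl⟩ <;>
    rcases hx with ⟨h, -⟩ | ⟨h, -⟩ <;> contradiction

omit [NeZero m] in
theorem CyclicOrd4.crosses (h : CyclicOrd4 a b c d) : Chord.Crosses s(a, c) s(b, d) :=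
  ⟨a, c, b, d, rfl, rfl, Or.inl ⟨⟨h.1, h.2.1⟩, fun hd => by
    have := h.2.2
    unfold InArc at hd
    omega⟩⟩

end CyclicOrder

section RelPairs

variable {α β : Type*} {r : α → α → Prop} {C : Set α}

def relPairs (r : α → α → Prop) (C : Set α) : Set (Finset α) :=
  {P | P.card = 2 ∧ ↑P ⊆ C ∧ ∀ e ∈ P, ∀ f ∈ P, e ≠ f → r e f}

theorem pair_mem_relPairs [DecidableEq α] {a b : α} (hab : a ≠ b) (ha : a ∈ C) (hb : b ∈ C)
    (hrab : r a b) (hrba : r b a) : {a, b} ∈ relPairs r C := by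
  refine ⟨Finset.card_pair hab, ?_, ?_⟩
  · simp [Set.insert_subset_iff, ha, hb]
  · simp only [Finset.mem_insert, Finset.mem_singleton]
    rintro e (rfl | rfl) f (rfl | rfl) hef <;> first | exact absurd rfl hef | assumption

theorem ncard_relPairs_image {r' : β → β → Prop} {ψ : α → β} (hψ : C.InjOn ψ)
    (hr : ∀ e ∈ C, ∀ f ∈ C, (r' (ψ e) (ψ f) ↔ r e f)) :
    (relPairs r' (ψ '' C)).ncard = (relPairs r C).ncard := by
  classical
  have himage : relPairs r' (ψ '' C) = Finset.image ψ '' relPairs r C := by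
    ext P'
    constructor
    · rintro ⟨hcard, hsub, hrel⟩
      obtain ⟨P, hPC, rfl⟩ := Finset.subset_set_image_iff.mp hsub
      have hinj : Set.InjOn ψ P := hψ.mono hPC
      refine ⟨P, ⟨?_, hPC, fun e he f hf hef => ?_⟩, rfl⟩
      · rwa [Finset.card_image_of_injOn hinj] at hcard
      · exact (hr e (hPC he) f (hPC hf)).mp (hrel _ (Finset.mem_image_of_mem ψ he) _
          (Finset.mem_image_of_mem ψ hf) (hinj.ne he hf hef))
    · rintro ⟨P, ⟨hcard, hPC, hrel⟩, rfl⟩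
      refine ⟨?_, ?_, ?_⟩
      · rw [Finset.card_image_of_injOn (hψ.mono hPC), hcard]
      · rw [Finset.coe_image]
        exact Set.image_mono hPC
      · simp only [Finset.mem_image]
        rintro _ ⟨e, he, rfl⟩ _ ⟨f, hf, rfl⟩ hef
        exact (hr e (hPC he) f (hPC hf)).mpr (hrel e he f hf (fun h => hef (h ▸ rfl)))
  rw [himage]
  refine Set.InjOn.ncard_image fun P hP Q hQ h => Finset.coe_injective ?_
  apply (hψ.image_eq_image_iff hP.2.1 hQ.2.1).mp
  simpa using congrArg (fun P : Finset β => (P : Set β)) h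

theorem ncard_relPairs_eq_sdiff_add [Finite α] (r : α → α → Prop) (C S : Set α) :
    (relPairs r C).ncard =
      (relPairs r (C \ S)).ncard + {P ∈ relPairs r C | ∃ e ∈ P, e ∈ S}.ncard := by
  rw [← Set.ncard_inter_add_ncard_sdiff_eq_ncard (relPairs r C) {P | ∃ e ∈ P, e ∈ S}, add_comm]
  congr 2
  ext P
  simp only [relPairs, Set.subset_sdiff, Set.mem_sdiff, Set.mem_ofPred_eq, Set.disjoint_left,
    Finset.mem_coe, not_exists, not_and]
  tauto

theorem ncard_relPairs_mem (hsymm : ∀ e ∈ C, ∀ f ∈ C, r e f → r f e) (hirr : ∀ e, ¬ r e e)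
    {a : α} (ha : a ∈ C) : {P ∈ relPairs r C | a ∈ P}.ncard = {f | f ∈ C ∧ r a f}.ncard := by
  classical
  have himage : {P ∈ relPairs r C | a ∈ P} = (fun f => {a, f}) '' {f | f ∈ C ∧ r a f} := by
    ext P
    constructor
    · rintro ⟨⟨hcard, hPC, hrel⟩, haP⟩
      obtain ⟨x, y, hxy, rfl⟩ := Finset.card_eq_two.mp hcard
      have hx : x ∈ C := hPC (by simp)
      have hy : y ∈ C := hPC (by simp)
      rcases Finset.mem_insert.mp haP with rfl | hay
      · exact ⟨y, ⟨hy, hrel _ (by simp) _ (by simp) hxy⟩, rfl⟩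
      · obtain rfl := Finset.mem_singleton.mp hay
        exact ⟨x, ⟨hx, hrel _ (by simp) _ (by simp) hxy.symm⟩, Finset.pair_comm _ _⟩
    · rintro ⟨f, ⟨hf, haf⟩, rfl⟩
      have hne : a ≠ f := fun h => hirr a (h ▸ haf)
      exact ⟨pair_mem_relPairs hne ha hf haf (hsymm a ha f hf haf), by simp⟩
  rw [himage]
  refine Set.InjOn.ncard_image ?_
  rintro f ⟨-, haf⟩ g - hfg
  have hf : f ∈ ({a, g} : Finset α) := by
    rw [← show ({a, f} : Finset α) = {a, g} from hfg]
    simp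
  rcases Finset.mem_insert.mp hf with rfl | hf
  · exact absurd haf (hirr f)
  · exact Finset.mem_singleton.mp hf

end RelPairs

namespace ChordDiagram

variable {n n' : ℕ} (D : ChordDiagram n) {D' : ChordDiagram n'}

theorem mk_mem_chords_iff {a b : ZMod (2 * n)} : s(a, b) ∈ D.chords ↔ D.inv a = b := by
  refine ⟨fun ⟨x, hx⟩ => ?_, fun h => ⟨a, h ▸ rfl⟩⟩
  rcases Sym2.eq_iff.mp hx with ⟨rfl, rfl⟩ | ⟨rfl, rfl⟩
  · rfl
  · exact D.involutive _

theorem eq_mk_of_mem {e : Chord (2 * n)} (he : e ∈ D.chords) {x : ZMod (2 * n)} (hx : x ∈ e) :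
    e = s(x, D.inv x) := by
  obtain ⟨y, rfl⟩ := he
  rcases Sym2.mem_iff.mp hx with rfl | rfl
  · rfl
  · rw [D.involutive, Sym2.eq_swap]

theorem ne_of_mem_of_ne {e f : Chord (2 * n)} (he : e ∈ D.chords) (hf : f ∈ D.chords)
    (hef : e ≠ f) {x y : ZMod (2 * n)} (hx : x ∈ e) (hy : y ∈ f) : x ≠ y := by
  rintro rfl
  exact hef ((D.eq_mk_of_mem he hx).trans (D.eq_mk_of_mem hf hy).symm)

theorem ne_of_mk_mem_chords {a b : ZMod (2 * n)} (h : s(a, b) ∈ D.chords) : a ≠ b :=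
  D.mk_mem_chords_iff.mp h ▸ (D.fixedPointFree a).symm

theorem X_eq_ncard_relPairs : D.X = (relPairs Chord.Crosses D.chords).ncard := rfl

variable {D} in
theorem DeletionOf.exists_injOn {S : Set (Chord (2 * n))} (h : D.DeletionOf S D') :
    ∃ ψ : Chord (2 * n) → Chord (2 * n'), (D.chords \ S).InjOn ψ ∧
      ψ '' (D.chords \ S) = D'.chords ∧
      ∀ e ∈ D.chords \ S, ∀ f ∈ D.chords \ S,
        (Chord.Crosses (ψ e) (ψ f) ↔ Chord.Crosses e f) := by
  classical
  obtain ⟨φ, hφ⟩ := h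
  let ψ : Chord (2 * n) → Chord (2 * n') := fun e =>
    if he : e ∈ D.chords \ S then (φ ⟨e, he⟩).1 else s(0, 0)
  have hψ : ∀ e (he : e ∈ D.chords \ S), ψ e = (φ ⟨e, he⟩).1 := fun e he => dif_pos he
  refine ⟨ψ, fun e he f hf hef => ?_, ?_, fun e he f hf => ?_⟩
  · rw [hψ e he, hψ f hf] at hef
    exact congrArg Subtype.val (φ.injective (Subtype.ext hef))
  · ext e'
    refine ⟨?_, fun he' => ⟨_, (φ.symm ⟨e', he'⟩).2, ?_⟩⟩
    · rintro ⟨e, he, rfl⟩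
      exact hψ e he ▸ (φ ⟨e, he⟩).2
    · rw [hψ _ (φ.symm ⟨e', he'⟩).2, Equiv.apply_symm_apply]
  · rw [hψ e he, hψ f hf]
    exact (hφ ⟨e, he⟩ ⟨f, hf⟩).symm

variable [NeZero n]

theorem crosses_comm {e f : Chord (2 * n)} (he : e ∈ D.chords) (hf : f ∈ D.chords) :
    Chord.Crosses e f ↔ Chord.Crosses f e := by
  rcases eq_or_ne e f with rfl | hef
  · rfl
  obtain ⟨a, rfl⟩ := id he
  obtain ⟨c, rfl⟩ := id hf
  have hne : ∀ {x y}, x ∈ s(c, D.inv c) → y ∈ s(a, D.inv a) → x ≠ y :=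
    D.ne_of_mem_of_ne hf he hef.symm
  exact Chord.crosses_mk_comm (D.fixedPointFree a).symm (D.fixedPointFree c).symm
    (hne (Sym2.mem_mk_left _ _) (Sym2.mem_mk_left _ _))
    (hne (Sym2.mem_mk_left _ _) (Sym2.mem_mk_right _ _))
    (hne (Sym2.mem_mk_right _ _) (Sym2.mem_mk_left _ _))
    (hne (Sym2.mem_mk_right _ _) (Sym2.mem_mk_right _ _))

theorem crosses_mk_iff_crosses_mk_add_one {i j : ZMod (2 * n)} {e : Chord (2 * n)}
    (hα : s(i, j) ∈ D.chords) (hβ : s(i + 1, j + 1) ∈ D.chords) (he : e ∈ D.chords)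
    (heα : e ≠ s(i, j)) (heβ : e ≠ s(i + 1, j + 1)) :
    Chord.Crosses e s(i, j) ↔ Chord.Crosses e s(i + 1, j + 1) := by
  obtain ⟨x, rfl⟩ := id he
  have hα' : ∀ {y z}, y ∈ s(x, D.inv x) → z ∈ s(i, j) → y ≠ z := D.ne_of_mem_of_ne he hα heα
  have hβ' : ∀ {y z}, y ∈ s(x, D.inv x) → z ∈ s(i + 1, j + 1) → y ≠ z :=
    D.ne_of_mem_of_ne he hβ heβ
  have hx := Sym2.mem_mk_left x (D.inv x)
  have hy := Sym2.mem_mk_right x (D.inv x)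
  have hi := Sym2.mem_mk_left i j
  have hj := Sym2.mem_mk_right i j
  have hi₁ := Sym2.mem_mk_left (i + 1) (j + 1)
  have hj₁ := Sym2.mem_mk_right (i + 1) (j + 1)
  rw [D.crosses_comm he hα, D.crosses_comm he hβ,
    Chord.crosses_mk_iff (D.ne_of_mk_mem_chords hα) (hα' hx hi) (hα' hx hj) (hα' hy hi) (hα' hy hj),
    Chord.crosses_mk_iff (D.ne_of_mk_mem_chords hβ) (hβ' hx hi₁) (hβ' hx hj₁) (hβ' hy hi₁)
      (hβ' hy hj₁),
    inArc_add_one_iff (hβ' hx hi₁) (hα' hx hj), inArc_add_one_iff (hβ' hy hi₁) (hα' hy hj)]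

theorem ncard_relPairs_crosses_mem {a : Chord (2 * n)} (ha : a ∈ D.chords) :
    {P ∈ relPairs Chord.Crosses D.chords | a ∈ P}.ncard =
      {f | f ∈ D.chords ∧ Chord.Crosses a f}.ncard :=
  ncard_relPairs_mem (fun _ he _ hf => (D.crosses_comm he hf).mp) Chord.not_crosses_self ha

theorem ncard_crosses_eq_add_one {a b : Chord (2 * n)} (ha : a ∈ D.chords)
    (hb : b ∈ D.chords) (hab : Chord.Crosses a b) :
    {f | f ∈ D.chords ∧ Chord.Crosses a f}.ncard =
      {e | e ∈ D.chords ∧ e ≠ b ∧ Chord.Crosses e a}.ncard + 1 := by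
  have hset : {f | f ∈ D.chords ∧ Chord.Crosses a f} =
      insert b {e | e ∈ D.chords ∧ e ≠ b ∧ Chord.Crosses e a} := by
    ext f
    simp only [Set.mem_insert_iff, Set.mem_ofPred_eq]
    by_cases hfb : f = b
    · subst hfb
      simp [hb, hab]
    · simp only [hfb, false_or, ne_eq, not_false_eq_true, true_and]
      exact and_congr_right fun hf => D.crosses_comm ha hf
  rw [hset, Set.ncard_insert_of_notMem fun h => h.2.1 rfl]

theorem ncard_crosses_eq_of_forall_crosses_iff {a b : Chord (2 * n)} (ha : a ∈ D.chords)
    (hb : b ∈ D.chords) (hab : Chord.Crosses a b)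
    (htwin : ∀ e ∈ D.chords, e ≠ a → e ≠ b → (Chord.Crosses e a ↔ Chord.Crosses e b)) :
    {f | f ∈ D.chords ∧ Chord.Crosses b f}.ncard =
      {f | f ∈ D.chords ∧ Chord.Crosses a f}.ncard := by
  rw [D.ncard_crosses_eq_add_one hb ha ((D.crosses_comm ha hb).mp hab),
    D.ncard_crosses_eq_add_one ha hb hab]
  congr 2
  ext e
  refine and_congr_right fun he => ⟨fun ⟨hea, hcr⟩ => ?_, fun ⟨heb, hcr⟩ => ?_⟩
  · have heb : e ≠ b := fun h => Chord.not_crosses_self e (h ▸ hcr)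
    exact ⟨heb, (htwin e he hea heb).mpr hcr⟩
  · have hea : e ≠ a := fun h => Chord.not_crosses_self e (h ▸ hcr)
    exact ⟨hea, (htwin e he hea heb).mp hcr⟩

variable {D} in
theorem DeletionOf.X_eq {S : Set (Chord (2 * n))} (h : D.DeletionOf S D') :
    D.X = D'.X + {P ∈ relPairs Chord.Crosses D.chords | ∃ e ∈ P, e ∈ S}.ncard := by
  obtain ⟨ψ, hinj, himage, hcrosses⟩ := h.exists_injOn
  rw [X_eq_ncard_relPairs, X_eq_ncard_relPairs, ← himage, ncard_relPairs_image hinj hcrosses]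
  exact ncard_relPairs_eq_sdiff_add _ _ _

variable {D} in
theorem DeletionOf.X_add_one_eq {a b : Chord (2 * n)} (ha : a ∈ D.chords) (hb : b ∈ D.chords)
    (hab : Chord.Crosses a b) (h : D.DeletionOf {a, b} D') :
    D.X + 1 = D'.X + {f | f ∈ D.chords ∧ Chord.Crosses a f}.ncard +
      {f | f ∈ D.chords ∧ Chord.Crosses b f}.ncard := by
  classical
  have hunion : {P ∈ relPairs Chord.Crosses D.chords | ∃ e ∈ P, e ∈ ({a, b} : Set _)} =
      {P ∈ relPairs Chord.Crosses D.chords | a ∈ P} ∪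
        {P ∈ relPairs Chord.Crosses D.chords | b ∈ P} := by
    ext P
    simp only [Set.mem_insert_iff, Set.mem_singleton_iff, and_or_left, exists_or,
      exists_eq_right, Set.mem_union, Set.mem_ofPred_eq]
  have hinter : {P ∈ relPairs Chord.Crosses D.chords | a ∈ P} ∩
      {P ∈ relPairs Chord.Crosses D.chords | b ∈ P} = {{a, b}} := by
    have hpair : {a, b} ∈ relPairs Chord.Crosses D.chords :=
      pair_mem_relPairs (fun h => Chord.not_crosses_self a (h ▸ hab)) ha hb hab
        ((D.crosses_comm ha hb).mp hab)
    ext P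
    refine ⟨fun ⟨⟨hP, haP⟩, _, hbP⟩ => ?_, ?_⟩
    · refine (Finset.eq_of_subset_of_card_le ?_ ?_).symm
      · exact Finset.insert_subset haP (Finset.singleton_subset_iff.mpr hbP)
      · rw [hP.1, hpair.1]
    · rintro rfl
      exact ⟨⟨hpair, by simp⟩, hpair, by simp⟩
  rw [h.X_eq, hunion, ← D.ncard_relPairs_crosses_mem ha, ← D.ncard_relPairs_crosses_mem hb,
    add_assoc, add_assoc, ← Set.ncard_union_add_ncard_inter, hinter, Set.ncard_singleton]

end ChordDiagram

/-- for a weak RII pair `α = {i, j}`, `β = {i+1, j+1}` (with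
`i, i+1, j, j+1` distinct and in this cyclic order), `α` and `β` cross, any other chord
crosses `α` iff it crosses `β`, and deleting `α` and `β` changes `X` by `2k + 1`, where
`k` is the number of chords other than `β` crossing `α`; if `D` is evenly interlaced,
`k` is odd, so `X(D) ≡ X(D') + 3 (mod 4)`. -/
theorem weak_RII_changes_X_by_4m_sub_one (n : ℕ) (D : ChordDiagram (n + 2))
    (D' : ChordDiagram n) (i j : ZMod (2 * (n + 2)))
    (hord : CyclicOrd4 i (i + 1) j (j + 1))
    (hα : s(i, j) ∈ D.chords) (hβ : s(i + 1, j + 1) ∈ D.chords)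
    (hdel : D.DeletionOf {s(i, j), s(i + 1, j + 1)} D')
    (k : ℕ)
    (hk : k = Set.ncard {e | e ∈ D.chords ∧ e ≠ s(i + 1, j + 1) ∧ Chord.Crosses e s(i, j)}) :
    Chord.Crosses s(i, j) s(i + 1, j + 1) ∧
      (∀ e ∈ D.chords, e ≠ s(i, j) → e ≠ s(i + 1, j + 1) →
        (Chord.Crosses e s(i, j) ↔ Chord.Crosses e s(i + 1, j + 1))) ∧
      D.X = D'.X + 2 * k + 1 ∧
      (D.EvenlyInterlaced → Odd k ∧ D.X ≡ D'.X + 3 [MOD 4]) := by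
  have hαβ : Chord.Crosses s(i, j) s(i + 1, j + 1) := hord.crosses
  have htwin : ∀ e ∈ D.chords, e ≠ s(i, j) → e ≠ s(i + 1, j + 1) →
      (Chord.Crosses e s(i, j) ↔ Chord.Crosses e s(i + 1, j + 1)) :=
    fun e he heα heβ => D.crosses_mk_iff_crosses_mk_add_one hα hβ he heα heβ
  have hdegα : {f | f ∈ D.chords ∧ Chord.Crosses s(i, j) f}.ncard = k + 1 :=
    hk ▸ D.ncard_crosses_eq_add_one hα hβ hαβ
  have hdegβ : {f | f ∈ D.chords ∧ Chord.Crosses s(i + 1, j + 1) f}.ncard = k + 1 :=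
    (D.ncard_crosses_eq_of_forall_crosses_iff hα hβ hαβ htwin).trans hdegα
  have hX : D.X = D'.X + 2 * k + 1 := by
    have := hdel.X_add_one_eq hα hβ hαβ
    omega
  refine ⟨hαβ, htwin, hX, fun hEI => ?_⟩
  have hodd : Odd k := Nat.not_even_iff_odd.mp (Nat.even_add_one.mp (hdegα ▸ hEI _ hα))
  refine ⟨hodd, ?_⟩
  obtain ⟨t, rfl⟩ := hodd
  unfold Nat.ModEq
  omega
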